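/- Let varphi : R^n -> [0,infinity] be a proper lower semi-continuous convex function with varphi(0) = 0, and let L(varphi)(y) = sup_x (<x,y> - varphi(x)) be its Legendre transform. Then for all s, t > 0: t * ({x : varphi(x) <= t})^polar is contained in {y : L(varphi)(y) <= t}, which in turn is contained in (t+s) * ({x : varphi(x) <= s})^polar. -/

import Mathlib

open Set
open scoped ENNReal Pointwise

/-- The polar of a set `A ⊆ ℝⁿ`: `A° = {y : ⟪x,y⟫ ≤ 1 for all x ∈ A}`. -/
def polarSet {n : ℕ} (A : Set (EuclideanSpace ℝ (Fin n))) : Set (EuclideanSpace ℝ (Fin n)) :=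
  {y | ∀ x ∈ A, (inner ℝ x y : ℝ) ≤ 1}

/-- The Legendre transform `L(φ)(y) = sup_x (⟪x,y⟫ - φ(x))` of a `[0,∞]`-valued function,
with values in the extended reals. -/
noncomputable def legendre {n : ℕ} (φ : EuclideanSpace ℝ (Fin n) → ℝ≥0∞)
    (y : EuclideanSpace ℝ (Fin n)) : EReal :=
  ⨆ x : EuclideanSpace ℝ (Fin n), (((inner ℝ x y : ℝ) : EReal) - (φ x : EReal))

/- For the first inclusion, take `z` in the polar of `{φ ≤ t}` and any `x` with `φ x = r`. If
`r ≤ t` then `⟪x, z⟫ ≤ 1` directly; if `r > t`, convexity and `φ 0 = 0` put `(t / r) • x` in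
`{φ ≤ t}`, so `t ⟪x, z⟫ ≤ r`. Either way `⟪x, t z⟫ - φ x ≤ t`. The second inclusion is the
Fenchel–Young inequality `⟪x, y⟫ ≤ L(φ)(y) + φ(x) ≤ t + s` on `{φ ≤ s}`. -/

theorem apply_smul_le_of_convex {E : Type*} [AddCommGroup E] [Module ℝ E] (φ : E → ℝ≥0∞)
    (hconv : ∀ x y : E, ∀ a b : ℝ, 0 ≤ a → 0 ≤ b → a + b = 1 →
      φ (a • x + b • y) ≤ ENNReal.ofReal a * φ x + ENNReal.ofReal b * φ y)
    (h0 : φ 0 = 0) (x : E) {c : ℝ} (hc0 : 0 ≤ c) (hc1 : c ≤ 1) :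
    φ (c • x) ≤ ENNReal.ofReal c * φ x := by
  simpa [h0] using hconv x 0 c (1 - c) hc0 (by linarith) (by ring)

variable {n : ℕ}

theorem legendre_le_coe_iff (φ : EuclideanSpace ℝ (Fin n) → ℝ≥0∞)
    (y : EuclideanSpace ℝ (Fin n)) (t : ℝ) :
    legendre φ y ≤ (t : EReal) ↔ ∀ x, φ x ≠ ⊤ → inner ℝ x y ≤ t + (φ x).toReal := by
  refine iSup_le_iff.trans (forall_congr' fun x => ?_)
  by_cases hx : φ x = ⊤
  · simp [hx]
  · have hφx : (φ x : EReal) = ((φ x).toReal : EReal) := by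
      rw [← EReal.coe_ennreal_toReal hx]
    rw [hφx, ← EReal.coe_sub, EReal.coe_le_coe_iff]
    exact ⟨fun h _ => by linarith, fun h => by linarith [h hx]⟩

theorem mul_inner_le_of_mem_polarSet_sublevel (φ : EuclideanSpace ℝ (Fin n) → ℝ≥0∞)
    (hconv : ∀ x y : EuclideanSpace ℝ (Fin n), ∀ a b : ℝ, 0 ≤ a → 0 ≤ b → a + b = 1 →
      φ (a • x + b • y) ≤ ENNReal.ofReal a * φ x + ENNReal.ofReal b * φ y)
    (h0 : φ 0 = 0) {t : ℝ} (ht : 0 < t) {z : EuclideanSpace ℝ (Fin n)}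
    (hz : z ∈ polarSet {x | φ x ≤ ENNReal.ofReal t}) {x : EuclideanSpace ℝ (Fin n)}
    (hx : φ x ≠ ⊤) :
    t * inner ℝ x z ≤ max t (φ x).toReal := by
  set r := (φ x).toReal
  have hφx : φ x = ENNReal.ofReal r := (ENNReal.ofReal_toReal hx).symm
  rcases le_or_gt r t with hrt | htr
  · have hxz : inner ℝ x z ≤ 1 := hz x (by simpa [hφx] using ENNReal.ofReal_le_ofReal hrt)
    nlinarith [le_max_left t r]
  · have hr0 : 0 < r := ht.trans htr
    have hscaled : φ ((t / r) • x) ≤ ENNReal.ofReal t := by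
      calc φ ((t / r) • x) ≤ ENNReal.ofReal (t / r) * ENNReal.ofReal r :=
            hφx ▸ apply_smul_le_of_convex φ hconv h0 x (by positivity)
              ((div_le_one hr0).2 htr.le)
        _ = ENNReal.ofReal t := by
            rw [← ENNReal.ofReal_mul (by positivity), div_mul_cancel₀ _ hr0.ne']
    have hxz : t / r * inner ℝ x z ≤ 1 := by
      simpa [real_inner_smul_left] using hz _ hscaled
    rw [max_eq_right htr.le]
    rwa [div_mul_eq_mul_div, div_le_one hr0] at hxz

theorem stmt10_general {n : ℕ} (φ : EuclideanSpace ℝ (Fin n) → ℝ≥0∞)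
    (hconv : ∀ x y : EuclideanSpace ℝ (Fin n), ∀ a b : ℝ, 0 ≤ a → 0 ≤ b → a + b = 1 →
      φ (a • x + b • y) ≤ ENNReal.ofReal a * φ x + ENNReal.ofReal b * φ y)
    (h0 : φ 0 = 0)
    (s t : ℝ) (hs : 0 < s) (ht : 0 < t) :
    t • polarSet {x | φ x ≤ ENNReal.ofReal t} ⊆ {y | legendre φ y ≤ (t : EReal)} ∧
    {y | legendre φ y ≤ (t : EReal)} ⊆ (t + s) • polarSet {x | φ x ≤ ENNReal.ofReal s} := by
  constructor
  · rintro _ ⟨z, hz, rfl⟩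
    refine (legendre_le_coe_iff φ _ t).2 fun x hx => ?_
    rw [real_inner_smul_right]
    exact (mul_inner_le_of_mem_polarSet_sublevel φ hconv h0 ht hz hx).trans
      (max_le_add_of_nonneg ht.le ENNReal.toReal_nonneg)
  · intro y hy
    have hts : 0 < t + s := by linarith
    rw [mem_smul_set_iff_inv_smul_mem₀ hts.ne']
    intro x hx
    have hxs : (φ x).toReal ≤ s := ENNReal.toReal_le_of_le_ofReal hs.le hx
    have hfenchelYoung := (legendre_le_coe_iff φ y t).1 hy x (ne_top_of_le_ne_top ENNReal.ofReal_ne_top hx)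
    rw [real_inner_smul_right, inv_mul_le_iff₀ hts, mul_one]
    linarith

/-- Fradelizi–Meyer: if `φ : ℝⁿ → [0,∞]` is a proper l.s.c. convex function with `φ(0)=0`,
then for all `s,t > 0`,
`t ⋅ {φ ≤ t}° ⊆ {L(φ) ≤ t} ⊆ (t+s) ⋅ {φ ≤ s}°`. -/
theorem stmt10 {n : ℕ} (φ : EuclideanSpace ℝ (Fin n) → ℝ≥0∞)
    (hproper : ∃ x, φ x ≠ ⊤)
    (hlsc : LowerSemicontinuous φ)
    (hconv : ∀ x y : EuclideanSpace ℝ (Fin n), ∀ a b : ℝ, 0 ≤ a → 0 ≤ b → a + b = 1 →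
      φ (a • x + b • y) ≤ ENNReal.ofReal a * φ x + ENNReal.ofReal b * φ y)
    (h0 : φ 0 = 0)
    (s t : ℝ) (hs : 0 < s) (ht : 0 < t) :
    t • polarSet {x | φ x ≤ ENNReal.ofReal t} ⊆ {y | legendre φ y ≤ (t : EReal)} ∧
    {y | legendre φ y ≤ (t : EReal)} ⊆ (t + s) • polarSet {x | φ x ≤ ENNReal.ofReal s} :=
  stmt10_general φ hconv h0 s t hs ht
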